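/- arXiv:0809.1590 — 7 statements merged into one kernel-verified Lean document; each statement's English description precedes it below -/
import Mathlib

section
/- Let W, P be d × n real matrices such that Wᵀ P = 0. Then ‖W + P‖₁ ≥ ‖W‖₁, where ‖·‖₁ denotes the trace norm (nuclear norm), i.e., the sum of the singular values, equivalently trace((AᵀA)^{1/2}). -/
/-!
Orthogonality `Wᵀ P = 0` makes the Gram matrices add: `(W + P)ᵀ (W + P) = Wᵀ W + Pᵀ P ≥ Wᵀ W`
in the Loewner order. The square root is operator monotone and the trace is monotone, so
`tr √(Wᵀ W) ≤ tr √((W + P)ᵀ (W + P))`. Operator monotonicity of `√` is known in C⋆-algebras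
such as complex matrices; complexifying a real positive semidefinite matrix commutes with `√`.
-/

open Matrix

/-- The trace norm (nuclear norm) of a real matrix `A`, defined as
`trace ((Aᵀ A)^{1/2})` where the square root is the positive semidefinite
square root of the positive semidefinite matrix `Aᵀ A`. -/
noncomputable def traceNorm {d n : ℕ} (A : Matrix (Fin d) (Fin n) ℝ) : ℝ :=
  (((Matrix.posSemidef_conjTranspose_mul_self A).1.eigenvectorUnitary : Matrix (Fin n) (Fin n) ℝ) *
    diagonal ((RCLike.ofReal : ℝ → ℝ) ∘ Real.sqrt ∘ (Matrix.posSemidef_conjTranspose_mul_self A).1.eigenvalues) *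
    (star (Matrix.posSemidef_conjTranspose_mul_self A).1.eigenvectorUnitary : Matrix (Fin n) (Fin n) ℝ)).trace

open scoped MatrixOrder ComplexOrder Matrix.Norms.L2Operator

namespace Matrix

lemma transpose_mul_self_add_of_transpose_mul_eq_zero {m n R : Type*} [Fintype m] [CommRing R]
    {A B : Matrix m n R} (h : Aᵀ * B = 0) : (A + B)ᵀ * (A + B) = Aᵀ * A + Bᵀ * B := by
  have h' : Bᵀ * A = 0 := by simpa using congrArg transpose h
  rw [transpose_add, Matrix.add_mul, Matrix.mul_add, Matrix.mul_add, h, h', add_zero, zero_add]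

variable {n : Type*} [Fintype n] [DecidableEq n]

lemma PosSemidef.map_ofReal {M : Matrix n n ℝ} (hM : M.PosSemidef) :
    (M.map Complex.ofRealHom).PosSemidef := by
  have hS : IsSelfAdjoint (CFC.sqrt M) := (CFC.sqrt_nonneg M).isSelfAdjoint
  nth_rw 1 [← CFC.sqrt_mul_sqrt_self M hM.nonneg, ← hS.star_eq]
  rw [Matrix.map_mul, star_eq_conjTranspose,
    conjTranspose_map Complex.ofRealHom (fun x => (Complex.conj_ofReal x).symm)]
  exact posSemidef_conjTranspose_mul_self _

lemma sqrt_map_ofReal {M : Matrix n n ℝ} (hM : 0 ≤ M) :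
    CFC.sqrt (M.map Complex.ofRealHom) = (CFC.sqrt M).map Complex.ofRealHom :=
  CFC.sqrt_unique (by rw [← Matrix.map_mul, CFC.sqrt_mul_sqrt_self M hM])
    (CFC.sqrt_nonneg M).posSemidef.map_ofReal.nonneg

lemma trace_sqrt_le_trace_sqrt {A B : Matrix n n ℝ} (hA : 0 ≤ A) (hAB : A ≤ B) :
    (CFC.sqrt A).trace ≤ (CFC.sqrt B).trace := by
  have hmap : A.map Complex.ofRealHom ≤ B.map Complex.ofRealHom := by
    rw [le_iff, ← Matrix.map_sub _ (map_sub _)]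
    exact (le_iff.mp hAB).map_ofReal
  have hsqrt := (le_iff.mp (CFC.sqrt_le_sqrt _ _ hmap)).trace_nonneg
  rw [trace_sub, sqrt_map_ofReal hA, sqrt_map_ofReal (hA.trans hAB), ← AddMonoidHom.map_trace,
    ← AddMonoidHom.map_trace, sub_nonneg] at hsqrt
  exact Complex.real_le_real.mp hsqrt

lemma PosSemidef.sqrt_eq_eigenvectorUnitary_mul_diagonal {A : Matrix n n ℝ} (hA : A.PosSemidef) :
    CFC.sqrt A = (hA.1.eigenvectorUnitary : Matrix n n ℝ) *
      diagonal ((RCLike.ofReal : ℝ → ℝ) ∘ Real.sqrt ∘ hA.1.eigenvalues) *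
      (star hA.1.eigenvectorUnitary : Matrix n n ℝ) := by
  rw [CFC.sqrt_eq_real_sqrt A hA.nonneg, cfcₙ_eq_cfc (hf0 := Real.sqrt_zero), hA.1.cfc_eq]
  simp [IsHermitian.cfc, Unitary.conjStarAlgAut_apply]

end Matrix

lemma traceNorm_eq_trace_sqrt {d n : ℕ} (A : Matrix (Fin d) (Fin n) ℝ) :
    traceNorm A = (CFC.sqrt (Aᵀ * A)).trace := by
  rw [traceNorm, ← (posSemidef_conjTranspose_mul_self A).sqrt_eq_eigenvectorUnitary_mul_diagonal,
    conjTranspose_eq_transpose_of_trivial]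

theorem stmt_1 {d n : ℕ} (W P : Matrix (Fin d) (Fin n) ℝ) (h : Wᵀ * P = 0) :
    traceNorm W ≤ traceNorm (W + P) := by
  rw [traceNorm_eq_trace_sqrt, traceNorm_eq_trace_sqrt,
    transpose_mul_self_add_of_transpose_mul_eq_zero h]
  have hW : 0 ≤ Wᵀ * W := by simpa using (posSemidef_conjTranspose_mul_self W).nonneg
  have hP : 0 ≤ Pᵀ * P := by simpa using (posSemidef_conjTranspose_mul_self P).nonneg
  exact trace_sqrt_le_trace_sqrt hW (le_add_of_nonneg_right hP)
end

section
/- Let d ≥ 2 and let Ω : ℝ^d → ℝ be differentiable. If Ω(w + p) ≥ Ω(w) for all w, p ∈ ℝ^d with ⟨w, p⟩ = 0, then there exists a nondecreasing function h : ℝ≥0 → ℝ such that Ω(w) = h(⟨w, w⟩) for all w ∈ ℝ^d. -/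
/-!
On every line `t ↦ w + t • p` with `p ⊥ w`, `Ω` is minimal at `t = 0`, so `dΩ(w)` vanishes on
`wᗮ`. The velocity of a great circle `t ↦ cos t • a + sin t • b` (`a ⊥ b`, `‖a‖ = ‖b‖`) is
orthogonal to its position, hence `Ω` is constant on such circles; in dimension at least two any
two points of a sphere lie on one of them, so `Ω` is radial. Monotonicity in the radius then
follows from Thales: if `‖u‖ ≤ ‖v‖`, some `w` with `‖w‖ = ‖u‖` satisfies `w ⊥ v - w`.
-/

open scoped RealInnerProductSpace
open Module Real

lemma exists_cos_eq_sin_eq {x y : ℝ} (h : x ^ 2 + y ^ 2 = 1) :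
    ∃ θ : ℝ, cos θ = x ∧ sin θ = y := by
  have hz : ‖(⟨x, y⟩ : ℂ)‖ = 1 := by
    rw [Complex.norm_def, Complex.normSq_mk, ← sq, ← sq, h, sqrt_one]
  refine ⟨Complex.arg ⟨x, y⟩, ?_, ?_⟩
  · rw [Complex.cos_arg (norm_ne_zero_iff.mp (by rw [hz]; exact one_ne_zero)), hz, div_one]
  · rw [Complex.sin_arg, hz, div_one]

section Geometry

variable {E : Type*} [NormedAddCommGroup E] [InnerProductSpace ℝ E]

lemma exists_inner_eq_zero_norm_eq (hE : 2 ≤ finrank ℝ E) (u : E) :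
    ∃ b : E, ⟪u, b⟫ = 0 ∧ ‖b‖ = ‖u‖ := by
  have : FiniteDimensional ℝ E := Module.finite_of_finrank_pos (by omega)
  have hne : (ℝ ∙ u)ᗮ ≠ ⊥ := by
    intro h
    have hsum := (ℝ ∙ u).finrank_add_finrank_orthogonal
    have hspan : finrank ℝ (ℝ ∙ u) ≤ 1 := by simpa using finrank_span_le_card ({u} : Set E)
    rw [h, finrank_bot] at hsum
    omega
  obtain ⟨x, hx, hx0⟩ := Submodule.exists_mem_ne_zero_of_ne_bot hne
  refine ⟨(‖u‖ / ‖x‖) • x, ?_, ?_⟩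
  · rw [real_inner_smul_right, Submodule.mem_orthogonal_singleton_iff_inner_right.mp hx, mul_zero]
  · rw [norm_smul, norm_div, norm_norm, norm_norm, div_mul_cancel₀ _ (norm_ne_zero_iff.mpr hx0)]

lemma exists_eq_cos_smul_add_sin_smul (hE : 2 ≤ finrank ℝ E) {u v : E} (huv : ‖u‖ = ‖v‖) :
    ∃ (b : E) (θ : ℝ), ⟪u, b⟫ = 0 ∧ ‖b‖ = ‖u‖ ∧ v = cos θ • u + sin θ • b := by
  rcases eq_or_ne u 0 with rfl | hu
  · exact ⟨0, 0, inner_zero_right _, rfl, by simpa [eq_comm] using huv⟩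
  have hr : ‖u‖ ≠ 0 := norm_ne_zero_iff.mpr hu
  set x := ⟪u, v⟫ / ‖u‖ ^ 2
  set q := v - x • u
  have hq : ⟪u, q⟫ = 0 := by
    rw [inner_sub_right, real_inner_smul_right, real_inner_self_eq_norm_sq, div_mul_cancel₀ _ (pow_ne_zero 2 hr), sub_self]
  obtain ⟨b, hb, hbn, y, hqy⟩ : ∃ b : E, ⟪u, b⟫ = 0 ∧ ‖b‖ = ‖u‖ ∧ ∃ y : ℝ, q = y • b := by
    rcases eq_or_ne q 0 with hq0 | hq0
    · obtain ⟨b, hb, hbn⟩ := exists_inner_eq_zero_norm_eq hE u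
      exact ⟨b, hb, hbn, 0, by rw [hq0, zero_smul]⟩
    have hqn : ‖q‖ ≠ 0 := norm_ne_zero_iff.mpr hq0
    refine ⟨(‖u‖ / ‖q‖) • q, ?_, ?_, ‖q‖ / ‖u‖, ?_⟩
    · rw [real_inner_smul_right, hq, mul_zero]
    · rw [norm_smul, norm_div, norm_norm, norm_norm, div_mul_cancel₀ _ hqn]
    · rw [smul_smul, div_mul_div_cancel₀ hr, div_self hqn, one_smul]
  have hv : v = x • u + y • b := by rw [← hqy, add_sub_cancel]
  have hxy : x ^ 2 + y ^ 2 = 1 := by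
    have hpyth := norm_add_sq_eq_norm_sq_add_norm_sq_of_inner_eq_zero (x • u) (y • b)
      (by rw [real_inner_smul_left, real_inner_smul_right, hb, mul_zero, mul_zero])
    rw [← hv, ← huv, norm_smul, norm_smul, hbn, norm_eq_abs, norm_eq_abs] at hpyth
    apply mul_right_cancel₀ (mul_self_ne_zero.mpr hr)
    linear_combination -hpyth - (‖u‖ * ‖u‖) * abs_mul_abs_self x - (‖u‖ * ‖u‖) * abs_mul_abs_self y
  obtain ⟨θ, hcos, hsin⟩ := exists_cos_eq_sin_eq hxy
  exact ⟨b, θ, hb, hbn, by rw [hcos, hsin, hv]⟩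

lemma exists_norm_eq_inner_sub_eq_zero (hE : 2 ≤ finrank ℝ E) {u v : E} (huv : ‖u‖ ≤ ‖v‖) :
    ∃ w : E, ‖w‖ = ‖u‖ ∧ ⟪w, v - w⟫ = 0 := by
  rcases eq_or_ne v 0 with rfl | hv
  · exact ⟨0, by rw [norm_zero, eq_comm, norm_eq_zero]; simpa using huv, by simp⟩
  have hR : 0 < ‖v‖ := norm_pos_iff.mpr hv
  obtain ⟨b, hb, hbn⟩ := exists_inner_eq_zero_norm_eq hE v
  set c := ‖u‖ / ‖v‖
  set s := √(1 - c ^ 2)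
  have hc0 : 0 ≤ c := by positivity
  have hc1 : c ≤ 1 := div_le_one_of_le₀ huv hR.le
  have hs : s ^ 2 = 1 - c ^ 2 := sq_sqrt (by nlinarith)
  -- `c • (c • v + s • b)`: the projection of `v` onto a line at angle `arccos c` to it
  refine ⟨(c ^ 2) • v + (c * s) • b, ?_, ?_⟩
  · have hpyth := norm_add_sq_eq_norm_sq_add_norm_sq_of_inner_eq_zero ((c ^ 2) • v) ((c * s) • b)
      (by rw [real_inner_smul_left, real_inner_smul_right, hb, mul_zero, mul_zero])
    rw [norm_smul, norm_smul, hbn, norm_eq_abs, norm_eq_abs, abs_of_nonneg (by positivity),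
      abs_of_nonneg (by positivity)] at hpyth
    have hu : ‖u‖ = c * ‖v‖ := (div_mul_cancel₀ _ hR.ne').symm
    refine (sq_eq_sq₀ (norm_nonneg _) (norm_nonneg _)).mp ?_
    rw [sq ‖_ + _‖, hpyth, hu]
    linear_combination (c ^ 2 * ‖v‖ ^ 2) * hs
  · have hbv : ⟪b, v⟫ = 0 := by rw [real_inner_comm, hb]
    simp only [inner_sub_right, inner_add_left, inner_add_right, real_inner_smul_left,
      real_inner_smul_right, hb, hbv]
    rw [real_inner_self_eq_norm_sq, real_inner_self_eq_norm_sq, hbn]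
    linear_combination (-c ^ 2 * ‖v‖ ^ 2) * hs

def MonotoneAlongOrthogonal (Ω : E → ℝ) : Prop :=
  ∀ w p : E, ⟪w, p⟫ = 0 → Ω w ≤ Ω (w + p)

namespace MonotoneAlongOrthogonal

variable {Ω : E → ℝ}

lemma fderiv_apply_eq_zero (hΩ : MonotoneAlongOrthogonal Ω) {w p : E}
    (hw : DifferentiableAt ℝ Ω w) (hp : ⟪w, p⟫ = 0) : fderiv ℝ Ω w p = 0 := by
  have hline : HasDerivAt (fun t : ℝ => w + t • p) p 0 := by
    simpa using ((hasDerivAt_id (0 : ℝ)).smul_const p).const_add w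
  have hcomp : HasDerivAt (fun t : ℝ => Ω (w + t • p)) (fderiv ℝ Ω w p) 0 :=
    hw.hasFDerivAt.comp_hasDerivAt_of_eq 0 hline (by simp)
  have hmin : IsLocalMin (fun t : ℝ => Ω (w + t • p)) 0 :=
    Filter.Eventually.of_forall fun t => by
      simpa using hΩ w (t • p) (by rw [real_inner_smul_right, hp, mul_zero])
  exact hmin.hasDerivAt_eq_zero hcomp

lemma apply_cos_smul_add_sin_smul (hΩ : MonotoneAlongOrthogonal Ω) (hdiff : Differentiable ℝ Ω)
    {a b : E} (hab : ⟪a, b⟫ = 0) (hnorm : ‖b‖ = ‖a‖) (θ : ℝ) :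
    Ω (cos θ • a + sin θ • b) = Ω a := by
  have hba : ⟪b, a⟫ = 0 := by rw [real_inner_comm, hab]
  have hcircle : ∀ t : ℝ, HasDerivAt (fun t => cos t • a + sin t • b)
      ((-sin t) • a + cos t • b) t := fun t =>
    ((hasDerivAt_cos t).smul_const a).add ((hasDerivAt_sin t).smul_const b)
  have hderiv : ∀ t : ℝ, HasDerivAt (fun t => Ω (cos t • a + sin t • b)) 0 t := fun t => by
    have htangent : ⟪cos t • a + sin t • b, (-sin t) • a + cos t • b⟫ = 0 := by
      simp only [inner_add_right, inner_add_left, real_inner_smul_left, real_inner_smul_right,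
        hab, hba, real_inner_self_eq_norm_sq, hnorm]
      ring
    have hcomp := (hdiff _).hasFDerivAt.comp_hasDerivAt t (hcircle t)
    rwa [hΩ.fderiv_apply_eq_zero (hdiff _) htangent] at hcomp
  simpa using is_const_of_deriv_eq_zero (fun t => (hderiv t).differentiableAt)
    (fun t => (hderiv t).deriv) θ 0

lemma eq_of_norm_eq (hΩ : MonotoneAlongOrthogonal Ω) (hdiff : Differentiable ℝ Ω)
    (hE : 2 ≤ finrank ℝ E) {u v : E} (huv : ‖u‖ = ‖v‖) : Ω u = Ω v := by
  obtain ⟨b, θ, hb, hbn, rfl⟩ := exists_eq_cos_smul_add_sin_smul hE huv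
  exact (hΩ.apply_cos_smul_add_sin_smul hdiff hb hbn θ).symm

lemma le_of_norm_le (hΩ : MonotoneAlongOrthogonal Ω) (hdiff : Differentiable ℝ Ω)
    (hE : 2 ≤ finrank ℝ E) {u v : E} (huv : ‖u‖ ≤ ‖v‖) : Ω u ≤ Ω v := by
  obtain ⟨w, hwn, hw⟩ := exists_norm_eq_inner_sub_eq_zero hE huv
  calc Ω u = Ω w := hΩ.eq_of_norm_eq hdiff hE hwn.symm
    _ ≤ Ω (w + (v - w)) := hΩ w (v - w) hw
    _ = Ω v := by rw [add_sub_cancel]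

end MonotoneAlongOrthogonal

end Geometry

theorem stmt_6 {d : ℕ} (hd : 2 ≤ d) (Ω : EuclideanSpace ℝ (Fin d) → ℝ)
    (hdiff : Differentiable ℝ Ω)
    (hmono : ∀ w p : EuclideanSpace ℝ (Fin d), inner ℝ w p = (0 : ℝ) → Ω w ≤ Ω (w + p)) :
    ∃ h : NNReal → ℝ, Monotone h ∧
      ∀ w : EuclideanSpace ℝ (Fin d), Ω w = h ⟨inner ℝ w w, real_inner_self_nonneg⟩ := by
  have hE : 2 ≤ finrank ℝ (EuclideanSpace ℝ (Fin d)) := by rwa [finrank_euclideanSpace_fin]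
  have hΩ : MonotoneAlongOrthogonal Ω := hmono
  have : Nontrivial (EuclideanSpace ℝ (Fin d)) := nontrivial_of_finrank_pos (R := ℝ) (by omega)
  obtain ⟨e, he⟩ := exists_norm_eq (EuclideanSpace ℝ (Fin d)) zero_le_one
  have hnorm : ∀ t : ℝ, ‖√t • e‖ = √t := fun t => by
    rw [norm_smul, he, mul_one, norm_of_nonneg (sqrt_nonneg t)]
  refine ⟨fun t => Ω (√t • e), fun s t hst => ?_, fun w => ?_⟩
  · refine hΩ.le_of_norm_le hdiff hE ?_
    rw [hnorm, hnorm]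
    exact sqrt_le_sqrt hst
  · refine hΩ.eq_of_norm_eq hdiff hE ?_
    change ‖w‖ = ‖√⟪w, w⟫ • e‖
    rw [hnorm, real_inner_self_eq_norm_sq, sqrt_sq (norm_nonneg w)]
end

section
/- Let d ≥ 2 and let Ω : ℝ^d → ℝ be differentiable. Then Ω satisfies Ω(w + p) ≥ Ω(w) for all orthogonal w, p ∈ ℝ^d if and only if Ω(w) = h(⟨w, w⟩) for some nondecreasing h : ℝ≥0 → ℝ. -/
/-!
Along a segment `t ↦ w + t • p` with `p ⟂ w` the function `Ω` is minimal at `t = 0`, so its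
derivative at `w` kills every vector orthogonal to `w`. The radial projection `x ↦ (r / ‖x‖) • x`
has derivative orthogonal to its value (its norm is constant), hence `Ω` composed with it has zero
derivative on `E \ {0}`, which is connected once `dim E ≥ 2`: so `Ω` is constant on spheres. Any
sphere of larger radius is reached from `w` by adding an orthogonal vector, so `Ω` is a
nondecreasing function of `‖w‖ ^ 2`. The converse is Pythagoras.
-/

open scoped InnerProductSpace Topology

variable {E : Type*} [NormedAddCommGroup E] [InnerProductSpace ℝ E]

def OrthogonallyMonotone (Ω : E → ℝ) : Prop :=
  ∀ w p : E, ⟪w, p⟫_ℝ = 0 → Ω w ≤ Ω (w + p)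

theorem exists_ne_zero_inner_eq_zero (hE : 1 < Module.rank ℝ E) (x : E) :
    ∃ y : E, y ≠ 0 ∧ ⟪x, y⟫_ℝ = 0 := by
  have hspan : (ℝ ∙ x) ≠ ⊤ := by
    intro h
    have hle := (rank_span_le (R := ℝ) ({x} : Set E)).trans_eq (Cardinal.mk_singleton x)
    rw [h, rank_top] at hle
    exact hE.not_ge hle
  obtain ⟨y, hy, hy0⟩ :=
    Submodule.exists_mem_ne_zero_of_ne_bot (mt Submodule.orthogonal_eq_bot_iff.mp hspan)
  exact ⟨y, hy0, Submodule.mem_orthogonal_singleton_iff_inner_right.mp hy⟩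

theorem exists_inner_eq_zero_norm_eq_s7 (hE : 1 < Module.rank ℝ E) (x : E) {r : ℝ} (hr : 0 ≤ r) :
    ∃ y : E, ⟪x, y⟫_ℝ = 0 ∧ ‖y‖ = r := by
  obtain ⟨y, hy0, hxy⟩ := exists_ne_zero_inner_eq_zero hE x
  refine ⟨(r / ‖y‖) • y, by rw [real_inner_smul_right, hxy, mul_zero], ?_⟩
  rw [norm_smul, Real.norm_of_nonneg (by positivity), div_mul_cancel₀ _ (norm_ne_zero_iff.mpr hy0)]

theorem inner_apply_eq_zero_of_eventually_norm_eq {G : Type*} [NormedAddCommGroup G]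
    [NormedSpace ℝ G] {f : G → E} {f' : G →L[ℝ] E} {x : G} (hf : HasFDerivAt f f' x)
    (hc : ∀ᶠ y in 𝓝 x, ‖f y‖ = ‖f x‖) (q : G) : ⟪f x, f' q⟫_ℝ = 0 := by
  have hconst : HasFDerivAt (‖f ·‖ ^ 2) (0 : G →L[ℝ] ℝ) x :=
    (hasFDerivAt_const (‖f x‖ ^ 2) x).congr_of_eventuallyEq (hc.mono fun y hy => by simp [hy])
  simpa using congrArg (· q) (hf.norm_sq.unique hconst)

namespace OrthogonallyMonotone

variable {Ω : E → ℝ}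

theorem fderiv_apply_eq_zero (hΩ : OrthogonallyMonotone Ω) {x p : E}
    (hx : DifferentiableAt ℝ Ω x) (hxp : ⟪x, p⟫_ℝ = 0) : fderiv ℝ Ω x p = 0 := by
  have hline : HasDerivAt (fun t : ℝ => Ω (x + t • p)) (fderiv ℝ Ω x p) 0 := by
    have hseg : HasDerivAt (fun t : ℝ => x + t • p) p 0 := by
      simpa using ((hasDerivAt_id (0 : ℝ)).smul_const p).const_add x
    exact hx.hasFDerivAt.comp_hasDerivAt_of_eq 0 hseg (by simp)
  have hmin : IsLocalMin (fun t : ℝ => Ω (x + t • p)) 0 :=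
    Filter.Eventually.of_forall fun t => by
      simpa using hΩ x (t • p) (by rw [real_inner_smul_right, hxp, mul_zero])
  exact hmin.hasDerivAt_eq_zero hline

theorem eq_of_norm_eq (hE : 1 < Module.rank ℝ E) (hΩ : OrthogonallyMonotone Ω)
    (hdiff : Differentiable ℝ Ω) {u v : E} (huv : ‖u‖ = ‖v‖) : Ω u = Ω v := by
  rcases eq_or_ne u 0 with rfl | hu
  · rw [norm_zero, eq_comm, norm_eq_zero] at huv
    rw [huv]
  have hv : v ≠ 0 := norm_ne_zero_iff.mp (huv ▸ norm_ne_zero_iff.mpr hu)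
  set N : E → E := fun x => (‖u‖ / ‖x‖) • x
  have hN_norm : ∀ x ≠ 0, ‖N x‖ = ‖u‖ := fun x hx => by
    rw [norm_smul, Real.norm_of_nonneg (by positivity),
      div_mul_cancel₀ _ (norm_ne_zero_iff.mpr hx)]
  have hN_fix : ∀ x, ‖x‖ = ‖u‖ → N x = x := fun x hx => by
    change (‖u‖ / ‖x‖) • x = x
    rw [hx, div_self (norm_ne_zero_iff.mpr hu), one_smul]
  have hderiv : ∀ x ≠ 0, HasFDerivAt (Ω ∘ N) (0 : E →L[ℝ] ℝ) x := by
    intro x hx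
    have hnorm : DifferentiableAt ℝ (‖·‖) x := (contDiffAt_norm ℝ hx).differentiableAt one_ne_zero
    have hNx : HasFDerivAt N (fderiv ℝ N x) x :=
      (show DifferentiableAt ℝ (fun y : E => (‖u‖ / ‖y‖) • y) x by
        fun_prop (disch := exact norm_ne_zero_iff.mpr hx)).hasFDerivAt
    have hN_const : ∀ᶠ y in 𝓝 x, ‖N y‖ = ‖N x‖ :=
      (isOpen_ne.eventually_mem hx).mono fun y hy => by rw [hN_norm y hy, hN_norm x hx]
    have hzero : (fderiv ℝ Ω (N x)).comp (fderiv ℝ N x) = 0 := ContinuousLinearMap.ext fun q =>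
      hΩ.fderiv_apply_eq_zero (hdiff _) (inner_apply_eq_zero_of_eventually_norm_eq hNx hN_const q)
    simpa only [hzero] using (hdiff (N x)).hasFDerivAt.comp x hNx
  have hconst := isOpen_ne.is_const_of_fderiv_eq_zero
    (isConnected_compl_singleton_of_one_lt_rank hE 0).isPreconnected
    (fun x hx => (hderiv x hx).differentiableAt.differentiableWithinAt)
    (fun x hx => (hderiv x hx).fderiv) hu hv
  simpa [hN_fix u rfl, hN_fix v huv.symm] using hconst

theorem le_of_norm_le (hE : 1 < Module.rank ℝ E) (hΩ : OrthogonallyMonotone Ω)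
    (hdiff : Differentiable ℝ Ω) {u v : E} (huv : ‖u‖ ≤ ‖v‖) : Ω u ≤ Ω v := by
  obtain ⟨p, hup, hp⟩ :=
    exists_inner_eq_zero_norm_eq_s7 hE u (Real.sqrt_nonneg (‖v‖ ^ 2 - ‖u‖ ^ 2))
  have hnorm : ‖u + p‖ = ‖v‖ := by
    have hpyth := norm_add_sq_eq_norm_sq_add_norm_sq_real hup
    rw [hp, Real.mul_self_sqrt (by nlinarith [norm_nonneg u])] at hpyth
    nlinarith [norm_nonneg (u + p), norm_nonneg v]
  calc Ω u ≤ Ω (u + p) := hΩ u p hup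
    _ = Ω v := hΩ.eq_of_norm_eq hE hdiff hnorm

theorem exists_monotone (hE : 1 < Module.rank ℝ E) (hΩ : OrthogonallyMonotone Ω)
    (hdiff : Differentiable ℝ Ω) :
    ∃ h : NNReal → ℝ, Monotone h ∧ ∀ w : E, Ω w = h ⟨⟪w, w⟫_ℝ, real_inner_self_nonneg⟩ := by
  obtain ⟨e, -, he⟩ := exists_inner_eq_zero_norm_eq_s7 hE (0 : E) zero_le_one
  have hnorm : ∀ s : NNReal, ‖Real.sqrt s • e‖ = Real.sqrt s := fun s => by
    rw [norm_smul, he, mul_one, Real.norm_of_nonneg (Real.sqrt_nonneg s)]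
  refine ⟨fun s => Ω (Real.sqrt s • e), fun s t hst => ?_, fun w => ?_⟩
  · refine hΩ.le_of_norm_le hE hdiff ?_
    rw [hnorm, hnorm]
    exact Real.sqrt_le_sqrt hst
  · refine hΩ.eq_of_norm_eq hE hdiff ((hnorm _).trans ?_).symm
    change Real.sqrt ⟪w, w⟫_ℝ = ‖w‖
    rw [real_inner_self_eq_norm_sq, Real.sqrt_sq (norm_nonneg w)]

end OrthogonallyMonotone

theorem orthogonallyMonotone_of_monotone {Ω : E → ℝ} {h : NNReal → ℝ} (hh : Monotone h)
    (hΩ : ∀ w : E, Ω w = h ⟨⟪w, w⟫_ℝ, real_inner_self_nonneg⟩) : OrthogonallyMonotone Ω := by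
  intro w p hwp
  rw [hΩ, hΩ]
  refine hh (show ⟪w, w⟫_ℝ ≤ ⟪w + p, w + p⟫_ℝ from ?_)
  rw [real_inner_self_eq_norm_mul_norm, real_inner_self_eq_norm_mul_norm,
    norm_add_sq_eq_norm_sq_add_norm_sq_real hwp]
  nlinarith [norm_nonneg p]

theorem stmt_7 {d : ℕ} (hd : 2 ≤ d) (Ω : EuclideanSpace ℝ (Fin d) → ℝ)
    (hdiff : Differentiable ℝ Ω) :
    (∀ w p : EuclideanSpace ℝ (Fin d), inner ℝ w p = (0 : ℝ) → Ω w ≤ Ω (w + p)) ↔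
      ∃ h : NNReal → ℝ, Monotone h ∧
        ∀ w : EuclideanSpace ℝ (Fin d), Ω w = h ⟨inner ℝ w w, real_inner_self_nonneg⟩ := by
  have hE : 1 < Module.rank ℝ (EuclideanSpace ℝ (Fin d)) := by
    rw [← Module.finrank_eq_rank, finrank_euclideanSpace_fin]
    exact_mod_cast hd
  exact ⟨fun hΩ => OrthogonallyMonotone.exists_monotone hE hΩ hdiff,
    fun ⟨_, hh, hΩ⟩ => orthogonallyMonotone_of_monotone hh hΩ⟩
end

section
/- Let Ω : M_{d,n}(ℝ) → ℝ satisfy Ω(W + P) ≥ Ω(W) for all W, P with Wᵀ P = 0. Then for any finite set of input vectors x_{ti} ∈ ℝ^d (i ∈ {1,…,m_t}, t ∈ {1,…,n}) and outputs y_{ti}, if the interpolation problem min{Ω(W) : wₜᵀ x_{ti} = y_{ti} for all i, t} has a solution, then it has a solution Ŵ each of whose columns ŵₜ lies in span{x_{si} : s ∈ {1,…,n}, i ∈ {1,…,m_s}}. -/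
open Matrix

/-!
Project every column of the given minimiser `W₀` orthogonally onto the span `U` of the inputs.
The constraints only test columns against vectors of `U`, so the projection `Ŵ` still satisfies
them; and the residual `W₀ - Ŵ` has columns orthogonal to `U`, so `Ŵᵀ (W₀ - Ŵ) = 0` and the
hypothesis on `Ω` gives `Ω Ŵ ≤ Ω (Ŵ + (W₀ - Ŵ)) = Ω W₀`.
-/

variable {ι κ : Type*} (U : Submodule ℝ (ι → ℝ))

/-- `ι → ℝ` carries the sup norm, so orthogonal projection onto `U` is taken in this copy. -/
def Submodule.toEuclideanSpace : Submodule ℝ (EuclideanSpace ℝ ι) :=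
  U.comap (WithLp.linearEquiv 2 ℝ (ι → ℝ)).toLinearMap

namespace Matrix

variable [Fintype ι]

noncomputable def projCols (W : Matrix ι κ ℝ) : Matrix ι κ ℝ :=
  (of fun t => (U.toEuclideanSpace.starProjection (WithLp.toLp 2 (Wᵀ t))).ofLp)ᵀ

theorem transpose_projCols_mem (W : Matrix ι κ ℝ) (t : κ) : (projCols U W)ᵀ t ∈ U :=
  Submodule.starProjection_apply_mem U.toEuclideanSpace (WithLp.toLp 2 (Wᵀ t))

theorem sub_transpose_projCols_dotProduct_eq_zero (W : Matrix ι κ ℝ) (t : κ) {u : ι → ℝ}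
    (hu : u ∈ U) : (Wᵀ t - (projCols U W)ᵀ t) ⬝ᵥ u = 0 := by
  have h := Submodule.starProjection_inner_eq_zero (K := U.toEuclideanSpace)
    (WithLp.toLp 2 (Wᵀ t)) (WithLp.toLp 2 u) hu
  rwa [EuclideanSpace.inner_eq_star_dotProduct, star_trivial, dotProduct_comm] at h

theorem transpose_projCols_dotProduct_of_mem (W : Matrix ι κ ℝ) (t : κ) {u : ι → ℝ}
    (hu : u ∈ U) : (projCols U W)ᵀ t ⬝ᵥ u = Wᵀ t ⬝ᵥ u := by
  have h := sub_transpose_projCols_dotProduct_eq_zero U W t hu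
  rwa [sub_dotProduct, sub_eq_zero, eq_comm] at h

theorem transpose_projCols_mul_sub_eq_zero [Fintype κ] (W : Matrix ι κ ℝ) :
    (projCols U W)ᵀ * (W - projCols U W) = 0 := by
  ext t s
  rw [mul_apply', zero_apply, dotProduct_comm]
  exact sub_transpose_projCols_dotProduct_eq_zero U W s (transpose_projCols_mem U W t)

theorem apply_projCols_le [Fintype κ] {Ω : Matrix ι κ ℝ → ℝ}
    (hΩ : ∀ W P : Matrix ι κ ℝ, Wᵀ * P = 0 → Ω W ≤ Ω (W + P)) (W : Matrix ι κ ℝ) :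
    Ω (projCols U W) ≤ Ω W := by
  have h := hΩ _ _ (transpose_projCols_mul_sub_eq_zero U W)
  rwa [add_sub_cancel] at h

end Matrix

theorem stmt_10 {d n : ℕ} (Ω : Matrix (Fin d) (Fin n) ℝ → ℝ)
    (hΩ : ∀ W P : Matrix (Fin d) (Fin n) ℝ, Wᵀ * P = 0 → Ω W ≤ Ω (W + P))
    (m : Fin n → ℕ) (x : ∀ t : Fin n, Fin (m t) → (Fin d → ℝ))
    (y : ∀ t : Fin n, Fin (m t) → ℝ)
    (W₀ : Matrix (Fin d) (Fin n) ℝ)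
    (hW₀c : ∀ (t : Fin n) (i : Fin (m t)), W₀ᵀ t ⬝ᵥ x t i = y t i)
    (hW₀min : ∀ W : Matrix (Fin d) (Fin n) ℝ,
      (∀ (t : Fin n) (i : Fin (m t)), Wᵀ t ⬝ᵥ x t i = y t i) → Ω W₀ ≤ Ω W) :
    ∃ Whatt : Matrix (Fin d) (Fin n) ℝ,
      (∀ (t : Fin n) (i : Fin (m t)), Whattᵀ t ⬝ᵥ x t i = y t i) ∧
      (∀ W : Matrix (Fin d) (Fin n) ℝ,
        (∀ (t : Fin n) (i : Fin (m t)), Wᵀ t ⬝ᵥ x t i = y t i) → Ω Whatt ≤ Ω W) ∧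
      ∀ t : Fin n, Whattᵀ t ∈ Submodule.span ℝ {v : Fin d → ℝ | ∃ s i, v = x s i} := by
  set U := Submodule.span ℝ {v : Fin d → ℝ | ∃ s i, v = x s i}
  have hxU : ∀ s i, x s i ∈ U := fun s i => Submodule.subset_span ⟨s, i, rfl⟩
  refine ⟨projCols U W₀, fun t i => ?_, fun W hW => (apply_projCols_le U hΩ W₀).trans (hW₀min W hW),
    transpose_projCols_mem U W₀⟩
  rw [transpose_projCols_dotProduct_of_mem U W₀ t (hxU t i), hW₀c]
end

section
/- Suppose that for every m ∈ ℕ and all data {(x_i, (y_{ti})_t) : i ≤ m} ⊆ ℝ^d × ℝ^n for which the constraints Wᵀ x_i = y_i are satisfiable, the problem min{Ω(W) : Wᵀ x_i = y_i, i ∈ {1,…,m}} admits a solution of the form Ŵ = X C where X is the matrix of inputs (columns x_i) and C is some m × n matrix (i.e., every column of Ŵ is in the span of the inputs). Then Ω(W + P) ≥ Ω(W) for all W, P ∈ M_{d,n}(ℝ) with Wᵀ P = 0. -/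
/-! Feed the problem the columns of `W` as inputs and the Gram matrix `Wᵀ W` as targets. Both `W`
and `W + P` interpolate these data, since `Pᵀ W = 0`. The minimiser `Ŵ = W C` lies in the column
span of `W` and matches its Gram data, which pins it down to `Ŵ = W`; hence `Ω W ≤ Ω (W + P)`. -/

open Matrix

namespace Matrix

theorem transpose_mul_eq_iff_forall_dotProduct {ι κ μ R : Type*} [Fintype ι]
    [NonUnitalNonAssocSemiring R] {V : Matrix ι κ R} {X : Matrix ι μ R} {Y : Matrix κ μ R} :
    (∀ (i : μ) (t : κ), Vᵀ t ⬝ᵥ (fun j => X j i) = Y t i) ↔ Vᵀ * X = Y :=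
  ⟨fun h => ext fun t i => h i t, fun h i t => congrFun (congrFun h t) i⟩

/-- `Wᵀ W (C - 1) = 0` forces `W (C - 1) = 0`. -/
theorem mul_eq_self_of_transpose_mul_eq {m n : Type*} [Fintype m] [Fintype n] [DecidableEq n]
    {W : Matrix m n ℝ} {C : Matrix n n ℝ} (h : (W * C)ᵀ * W = Wᵀ * W) : W * C = W := by
  have hGram : Wᴴ * W * (C - 1) = 0 := by
    rw [conjTranspose_eq_transpose_of_trivial, Matrix.mul_sub, Matrix.mul_one,
      Matrix.mul_assoc, sub_eq_zero]
    simpa only [transpose_mul, transpose_transpose] using congrArg transpose h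
  rwa [conjTranspose_mul_self_mul_eq_zero, Matrix.mul_sub, Matrix.mul_one, sub_eq_zero] at hGram

end Matrix

theorem stmt_11 {d n : ℕ} (Ω : Matrix (Fin d) (Fin n) ℝ → ℝ)
    (hyp : ∀ (m : ℕ) (x : Fin m → (Fin d → ℝ)) (y : Fin m → Fin n → ℝ),
      (∃ W : Matrix (Fin d) (Fin n) ℝ, ∀ (i : Fin m) (t : Fin n), Wᵀ t ⬝ᵥ x i = y i t) →
      ∃ Whatt : Matrix (Fin d) (Fin n) ℝ,
        (∀ (i : Fin m) (t : Fin n), Whattᵀ t ⬝ᵥ x i = y i t) ∧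
        (∀ W : Matrix (Fin d) (Fin n) ℝ,
          (∀ (i : Fin m) (t : Fin n), Wᵀ t ⬝ᵥ x i = y i t) → Ω Whatt ≤ Ω W) ∧
        ∃ C : Matrix (Fin m) (Fin n) ℝ, Whatt = (Matrix.of fun j i => x i j) * C) :
    ∀ W P : Matrix (Fin d) (Fin n) ℝ, Wᵀ * P = 0 → Ω W ≤ Ω (W + P) := by
  intro W P hWP
  obtain ⟨_, hfit, hmin, C, rfl⟩ :=
    hyp n (fun i j => W j i) (fun i t => (Wᵀ * W) t i)
      ⟨W, transpose_mul_eq_iff_forall_dotProduct.2 rfl⟩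
  have hWC : (of fun j i => W j i) * C = W :=
    mul_eq_self_of_transpose_mul_eq (transpose_mul_eq_iff_forall_dotProduct.1 hfit)
  have hfitP : (W + P)ᵀ * W = Wᵀ * W := by
    rw [transpose_add, Matrix.add_mul, ← transpose_transpose (Pᵀ * W), transpose_mul,
      transpose_transpose, hWP, transpose_zero, add_zero]
  simpa only [hWC] using hmin (W + P) (transpose_mul_eq_iff_forall_dotProduct.2 hfitP)
end

section
/- For W ∈ M_{d,n}(ℝ) define Ω(W) = Σₜ ‖wₜ − (1/n) Σₛ wₛ‖², where wₜ are the columns of W. Then Ω(W + P) ≥ Ω(W) for all W, P ∈ M_{d,n}(ℝ) with Wᵀ P = 0. -/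
open Matrix

theorem stmt_17 {d n : ℕ} (W P : Matrix (Fin d) (Fin n) ℝ) (h : Wᵀ * P = 0) :
    ∑ t : Fin n, ∑ j : Fin d, (W j t - (1 / (n : ℝ)) * ∑ s : Fin n, W j s) ^ 2 ≤
      ∑ t : Fin n, ∑ j : Fin d,
        ((W + P) j t - (1 / (n : ℝ)) * ∑ s : Fin n, (W + P) j s) ^ 2 := by
  have hst : ∀ s t : Fin n, ∑ j : Fin d, W j s * P j t = 0 := by
    intro s t
    have := congrFun (congrFun h s) t
    simpa [Matrix.mul_apply] using this
  have key1 : ∑ t : Fin n, ∑ j : Fin d, W j t * P j t = 0 :=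
    Finset.sum_eq_zero fun t _ => hst t t
  have key2 : ∑ j : Fin d, (∑ s : Fin n, W j s) * (∑ s : Fin n, P j s) = 0 := by
    calc ∑ j : Fin d, (∑ s : Fin n, W j s) * (∑ s : Fin n, P j s)
        = ∑ j : Fin d, ∑ s : Fin n, ∑ t : Fin n, W j s * P j t := by
          simp_rw [Finset.sum_mul, Finset.mul_sum]
      _ = ∑ s : Fin n, ∑ j : Fin d, ∑ t : Fin n, W j s * P j t := Finset.sum_comm
      _ = ∑ s : Fin n, ∑ t : Fin n, ∑ j : Fin d, W j s * P j t := by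
          exact Finset.sum_congr rfl fun s _ => Finset.sum_comm
      _ = 0 := by simp [hst]
  have h2 : ∑ t : Fin n, ∑ j : Fin d, W j t * ∑ s : Fin n, P j s = 0 := by
    rw [Finset.sum_comm]
    calc ∑ j : Fin d, ∑ t : Fin n, W j t * ∑ s : Fin n, P j s
        = ∑ j : Fin d, (∑ t : Fin n, W j t) * (∑ s : Fin n, P j s) := by
          simp_rw [Finset.sum_mul]
      _ = 0 := key2
  have h3 : ∑ t : Fin n, ∑ j : Fin d, (∑ s : Fin n, W j s) * P j t = 0 := by
    rw [Finset.sum_comm]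
    calc ∑ j : Fin d, ∑ t : Fin n, (∑ s : Fin n, W j s) * P j t
        = ∑ j : Fin d, (∑ s : Fin n, W j s) * (∑ t : Fin n, P j t) := by
          simp_rw [Finset.mul_sum]
      _ = 0 := key2
  have h4 : ∑ t : Fin n, ∑ j : Fin d,
      (∑ s : Fin n, W j s) * (∑ s : Fin n, P j s) = 0 := by
    rw [Finset.sum_const, key2, smul_zero]
  have cross : ∑ t : Fin n, ∑ j : Fin d,
      (W j t - (1 / (n:ℝ)) * ∑ s : Fin n, W j s) *
      (P j t - (1 / (n:ℝ)) * ∑ s : Fin n, P j s) = 0 := by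
    have expand : ∀ t : Fin n, ∀ j : Fin d,
        (W j t - (1 / (n:ℝ)) * ∑ s : Fin n, W j s) *
        (P j t - (1 / (n:ℝ)) * ∑ s : Fin n, P j s)
        = W j t * P j t
          - (1/(n:ℝ)) * (W j t * ∑ s : Fin n, P j s)
          - (1/(n:ℝ)) * ((∑ s : Fin n, W j s) * P j t)
          + (1/(n:ℝ))^2 * ((∑ s : Fin n, W j s) * (∑ s : Fin n, P j s)) := by
      intro t j; ring
    have e : ∑ t : Fin n, ∑ j : Fin d,
        (W j t - (1 / (n:ℝ)) * ∑ s : Fin n, W j s) *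
        (P j t - (1 / (n:ℝ)) * ∑ s : Fin n, P j s)
        = ∑ t : Fin n, ∑ j : Fin d,
          (W j t * P j t
          - (1/(n:ℝ)) * (W j t * ∑ s : Fin n, P j s)
          - (1/(n:ℝ)) * ((∑ s : Fin n, W j s) * P j t)
          + (1/(n:ℝ))^2 * ((∑ s : Fin n, W j s) * (∑ s : Fin n, P j s))) :=
      Finset.sum_congr rfl fun t _ => Finset.sum_congr rfl fun j _ => expand t j
    rw [e]
    simp_rw [Finset.sum_add_distrib]
    simp_rw [Finset.sum_sub_distrib]
    simp_rw [← Finset.mul_sum]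
    rw [key1, h2, h3, h4]
    ring
  have expand2 : ∀ t : Fin n, ∀ j : Fin d,
      ((W + P) j t - (1 / (n:ℝ)) * ∑ s : Fin n, (W + P) j s) ^ 2
      = (W j t - (1 / (n:ℝ)) * ∑ s : Fin n, W j s) ^ 2
        + (P j t - (1 / (n:ℝ)) * ∑ s : Fin n, P j s) ^ 2
        + 2 * ((W j t - (1 / (n:ℝ)) * ∑ s : Fin n, W j s) *
            (P j t - (1 / (n:ℝ)) * ∑ s : Fin n, P j s)) := by
    intro t j
    simp only [Matrix.add_apply, Finset.sum_add_distrib]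
    ring
  have hsq : (0:ℝ) ≤ ∑ t : Fin n, ∑ j : Fin d,
      (P j t - (1 / (n:ℝ)) * ∑ s : Fin n, P j s) ^ 2 :=
    Finset.sum_nonneg fun t _ => Finset.sum_nonneg fun j _ => sq_nonneg _
  calc ∑ t : Fin n, ∑ j : Fin d, (W j t - (1 / (n:ℝ)) * ∑ s : Fin n, W j s) ^ 2
      ≤ (∑ t : Fin n, ∑ j : Fin d, (W j t - (1 / (n:ℝ)) * ∑ s : Fin n, W j s) ^ 2)
        + (∑ t : Fin n, ∑ j : Fin d, (P j t - (1 / (n:ℝ)) * ∑ s : Fin n, P j s) ^ 2)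
        + 2 * (∑ t : Fin n, ∑ j : Fin d,
            (W j t - (1 / (n:ℝ)) * ∑ s : Fin n, W j s) *
            (P j t - (1 / (n:ℝ)) * ∑ s : Fin n, P j s)) := by
        rw [cross]; linarith
    _ = ∑ t : Fin n, ∑ j : Fin d,
        ((W + P) j t - (1 / (n:ℝ)) * ∑ s : Fin n, (W + P) j s) ^ 2 := by
        simp_rw [expand2, Finset.sum_add_distrib, ← Finset.mul_sum]
end

section
/- Let H be a real Hilbert space and let Ω : H → ℝ satisfy Ω(w + p) ≥ Ω(w) for all w, p ∈ H with ⟨w, p⟩ = 0. Then for any x₁, …, x_m ∈ H and y₁, …, y_m ∈ ℝ, if the problem min{Ω(w) : ⟨w, x_i⟩ = y_i, i = 1,…,m} has a solution ŵ, then its orthogonal projection w̄ of ŵ onto span{x₁, …, x_m} is also a solution. -/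
section OrthogonalDecomposition

variable {H : Type*} [NormedAddCommGroup H] [InnerProductSpace ℝ H]

lemma inner_left_eq_of_inner_sub_eq_zero {a b v : H} (h : inner ℝ (a - b) v = (0 : ℝ)) :
    inner ℝ b v = inner ℝ a v := by
  rw [inner_sub_left, sub_eq_zero] at h
  exact h.symm

lemma le_of_inner_sub_eq_zero {Ω : H → ℝ}
    (hΩ : ∀ w p : H, inner ℝ w p = (0 : ℝ) → Ω w ≤ Ω (w + p))
    {a b : H} (h : inner ℝ b (a - b) = (0 : ℝ)) : Ω b ≤ Ω a := by
  simpa using hΩ b (a - b) h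

end OrthogonalDecomposition

theorem stmt_19_general {H : Type*} [NormedAddCommGroup H] [InnerProductSpace ℝ H]
    (Ω : H → ℝ)
    (hΩ : ∀ w p : H, inner ℝ w p = (0 : ℝ) → Ω w ≤ Ω (w + p))
    (m : ℕ) (x : Fin m → H) (y : Fin m → ℝ) (what : H)
    (hconstr : ∀ i, inner ℝ what (x i) = y i)
    (hmin : ∀ w : H, (∀ i, inner ℝ w (x i) = y i) → Ω what ≤ Ω w)
    (wbar : H) (hwbar : wbar ∈ Submodule.span ℝ (Set.range x))
    (hproj : ∀ v ∈ Submodule.span ℝ (Set.range x), inner ℝ (what - wbar) v = (0 : ℝ)) :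
    (∀ i, inner ℝ wbar (x i) = y i) ∧
      ∀ w : H, (∀ i, inner ℝ w (x i) = y i) → Ω wbar ≤ Ω w := by
  have hfeasible : ∀ i, inner ℝ wbar (x i) = y i := fun i => by
    rw [inner_left_eq_of_inner_sub_eq_zero (hproj _ (Submodule.subset_span ⟨i, rfl⟩)), hconstr]
  have hle : Ω wbar ≤ Ω what :=
    le_of_inner_sub_eq_zero hΩ (by rw [real_inner_comm]; exact hproj wbar hwbar)
  exact ⟨hfeasible, fun w hw => hle.trans (hmin w hw)⟩

theorem stmt_19 {H : Type*} [NormedAddCommGroup H] [InnerProductSpace ℝ H]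
    [CompleteSpace H] (Ω : H → ℝ)
    (hΩ : ∀ w p : H, inner ℝ w p = (0 : ℝ) → Ω w ≤ Ω (w + p))
    (m : ℕ) (x : Fin m → H) (y : Fin m → ℝ) (what : H)
    (hconstr : ∀ i, inner ℝ what (x i) = y i)
    (hmin : ∀ w : H, (∀ i, inner ℝ w (x i) = y i) → Ω what ≤ Ω w)
    (wbar : H) (hwbar : wbar ∈ Submodule.span ℝ (Set.range x))
    (hproj : ∀ v ∈ Submodule.span ℝ (Set.range x), inner ℝ (what - wbar) v = (0 : ℝ)) :
    (∀ i, inner ℝ wbar (x i) = y i) ∧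
      ∀ w : H, (∀ i, inner ℝ w (x i) = y i) → Ω wbar ≤ Ω w :=
  stmt_19_general Ω hΩ m x y what hconstr hmin wbar hwbar hproj
end
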